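/- (Composite Lyapunov derivative bound for adaptive CLFs.) Let V_a : ℝⁿ × ℝᵖ → ℝ be continuously differentiable, f : ℝⁿ → ℝⁿ, F : ℝⁿ → ℝ^{n×p}, g : ℝⁿ → ℝ^{n×m} be continuous, Γ ∈ ℝ^{p×p} be symmetric positive definite, θ⋆ ∈ ℝᵖ, and α₃ : ℝ × ℝᵖ → ℝ. Suppose x : ℝ → ℝⁿ, θ̂ : ℝ → ℝᵖ, u : ℝ → ℝᵐ are differentiable and for all t: (i) ẋ(t) = f(x(t)) + F(x(t)) θ⋆ + g(x(t)) u(t); (ii) θ̂̇(t) = Γ τ(t) with the update law τ(t) = ( (∂V_a/∂x)(x(t),θ̂(t)) · F(x(t)) )ᵀ; (iii) the aCLF inequality (∂V_a/∂x)(x(t),θ̂(t)) · ( f(x(t)) + F(x(t)) · ( θ̂(t) + Γ ((∂V_a/∂θ)(x(t),θ̂(t)))ᵀ ) + g(x(t)) u(t) ) ≤ −α₃(‖x(t)‖, θ̂(t)). Define θ̃(t) = θ⋆ − θ̂(t) and V(t) = V_a(x(t),θ̂(t)) + (1/2) θ̃(t)ᵀ Γ⁻¹ θ̃(t). Then V is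 differentiable and V̇(t) ≤ −α₃(‖x(t)‖, θ̂(t)) for all t. -/

import Mathlib

/-! Along the trajectory `V̇ = ∂ₓV_a ẋ + ∂_θV_a Γτ − θ̃ᵀτ`. The update law makes
`θ̃ᵀτ = ∂ₓV_a F θ̃`, and since `Γ` is symmetric, `∂_θV_a Γτ = ∂ₓV_a F Γ (∂_θV_a)ᵀ`. Hence the
unknown `θ⋆` in `ẋ` is traded for the estimate `θ̂ + Γ (∂_θV_a)ᵀ`, and `V̇` is exactly the
left-hand side of the aCLF inequality. -/

open Matrix

/-- The Euclidean norm of a vector in `ℝ^k`. -/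
noncomputable def euclNorm {k : ℕ} (v : Fin k → ℝ) : ℝ :=
  ‖(WithLp.equiv 2 (Fin k → ℝ)).symm v‖

section LinearAlgebra

variable {ι κ R M : Type*} [Fintype ι] [CommSemiring R]

theorem apply_eq_dotProduct_single [DecidableEq ι] [FunLike M (ι → R) R]
    [LinearMapClass M R (ι → R) R] (ℓ : M) (v : ι → R) :
    ℓ v = v ⬝ᵥ fun i => ℓ (Pi.single i 1) := by
  conv_lhs => rw [pi_eq_sum_univ' v]
  simp only [map_sum, map_smul, smul_eq_mul, dotProduct]

theorem apply_mulVec_eq_dotProduct [FunLike M (κ → R) R] [LinearMapClass M R (κ → R) R]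
    (ℓ : M) (A : Matrix κ ι R) (v : ι → R) :
    ℓ (A *ᵥ v) = v ⬝ᵥ fun i => ℓ (fun j => A j i) := by
  simp only [mulVec_eq_sum, op_smul_eq_smul, map_sum, map_smul, smul_eq_mul, dotProduct]
  rfl

theorem Matrix.IsSymm.dotProduct_mulVec_comm {A : Matrix ι ι R} (hA : A.IsSymm) (v w : ι → R) :
    v ⬝ᵥ A *ᵥ w = w ⬝ᵥ A *ᵥ v := by
  rw [dotProduct_mulVec, ← mulVec_transpose, hA.eq, dotProduct_comm]

end LinearAlgebra

section Derivatives

variable {ι κ 𝕜 : Type*} [Fintype ι] [NontriviallyNormedField 𝕜] {t : 𝕜}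

theorem HasDerivAt.dotProduct {c d : 𝕜 → ι → 𝕜} {c' d' : ι → 𝕜}
    (hc : HasDerivAt c c' t) (hd : HasDerivAt d d' t) :
    HasDerivAt (fun s => c s ⬝ᵥ d s) (c' ⬝ᵥ d t + c t ⬝ᵥ d') t := by
  simp only [_root_.dotProduct, ← Finset.sum_add_distrib]
  exact HasDerivAt.fun_sum fun i _ => (hasDerivAt_pi.mp hc i).mul (hasDerivAt_pi.mp hd i)

theorem HasDerivAt.mulVec {c : 𝕜 → ι → 𝕜} {c' : ι → 𝕜} (A : Matrix κ ι 𝕜)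
    (hc : HasDerivAt c c' t) : HasDerivAt (fun s => A *ᵥ c s) (A *ᵥ c') t :=
  hasDerivAt_pi.mpr fun i =>
    ((hasDerivAt_const t (A i)).dotProduct hc).congr_deriv (by simp [Matrix.mulVec])

theorem HasDerivAt.dotProduct_mulVec_self {c : 𝕜 → ι → 𝕜} {c' : ι → 𝕜} {A : Matrix ι ι 𝕜}
    (hA : A.IsSymm) (hc : HasDerivAt c c' t) :
    HasDerivAt (fun s => c s ⬝ᵥ A *ᵥ c s) (2 * (c t ⬝ᵥ A *ᵥ c')) t :=
  (hc.dotProduct (hc.mulVec A)).congr_deriv (by rw [hA.dotProduct_mulVec_comm c']; ring)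

variable {E G H : Type*} [NormedAddCommGroup E] [NormedSpace 𝕜 E] [NormedAddCommGroup G]
  [NormedSpace 𝕜 G] [NormedAddCommGroup H] [NormedSpace 𝕜 H]

theorem DifferentiableAt.hasDerivAt_comp_prodMk {V : E × G → H} {a : 𝕜 → E} {b : 𝕜 → G}
    {a' : E} {b' : G} (hV : DifferentiableAt 𝕜 V (a t, b t)) (ha : HasDerivAt a a' t)
    (hb : HasDerivAt b b' t) :
    HasDerivAt (fun s => V (a s, b s))
      (fderiv 𝕜 (fun y => V (y, b t)) (a t) a' + fderiv 𝕜 (fun z => V (a t, z)) (b t) b') t := by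
  have hfst : HasFDerivAt (fun y => V (y, b t))
      ((fderiv 𝕜 V (a t, b t)).comp (.inl 𝕜 E G)) (a t) :=
    hV.hasFDerivAt.comp (a t) (hasFDerivAt_prodMk_left (a t) (b t))
  have hsnd : HasFDerivAt (fun z => V (a t, z))
      ((fderiv 𝕜 V (a t, b t)).comp (.inr 𝕜 E G)) (b t) :=
    hV.hasFDerivAt.comp (b t) (hasFDerivAt_prodMk_right (a t) (b t))
  rw [hfst.fderiv, hsnd.fderiv, ContinuousLinearMap.comp_inl_add_comp_inr (v := (a', b'))]
  exact hV.hasFDerivAt.comp_hasDerivAt t (ha.prodMk hb)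

end Derivatives

theorem apply_add_sub_dotProduct_eq_of_update_law {ι κ R Mx Mθ : Type*} [Fintype ι]
    [DecidableEq ι] [CommRing R] [FunLike Mx (κ → R) R] [LinearMapClass Mx R (κ → R) R]
    [FunLike Mθ (ι → R) R] [LinearMapClass Mθ R (ι → R) R]
    (ℓx : Mx) (ℓθ : Mθ) (A : Matrix κ ι R) {Γ : Matrix ι ι R} (hΓ : Γ.IsSymm)
    (v r : κ → R) (θs θh : ι → R) :
    ℓx (v + A *ᵥ θs + r) + ℓθ (Γ *ᵥ fun i => ℓx (fun j => A j i))
        - (θs - θh) ⬝ᵥ (fun i => ℓx (fun j => A j i))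
      = ℓx (v + A *ᵥ (θh + Γ *ᵥ fun i => ℓθ (Pi.single i 1)) + r) := by
  have hθ : ℓθ (Γ *ᵥ fun i => ℓx (fun j => A j i))
      = ℓx (A *ᵥ (Γ *ᵥ fun i => ℓθ (Pi.single i 1))) := by
    rw [apply_eq_dotProduct_single ℓθ, apply_mulVec_eq_dotProduct, dotProduct_comm,
      hΓ.dotProduct_mulVec_comm, dotProduct_comm]
  rw [hθ, ← apply_mulVec_eq_dotProduct]
  simp only [map_add, mulVec_add, mulVec_sub, map_sub]
  ring

theorem composite_lyapunov_derivative_bound_general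
    {n p m : ℕ}
    (Va : ((Fin n → ℝ) × (Fin p → ℝ)) → ℝ) (hVa : ContDiff ℝ 1 Va)
    (f : (Fin n → ℝ) → (Fin n → ℝ))
    (F : (Fin n → ℝ) → Matrix (Fin n) (Fin p) ℝ)
    (g : (Fin n → ℝ) → Matrix (Fin n) (Fin m) ℝ)
    (Γ : Matrix (Fin p) (Fin p) ℝ) (hΓ : Γ.PosDef)
    (θs : Fin p → ℝ)
    (α₃ : ℝ → (Fin p → ℝ) → ℝ)
    (x : ℝ → (Fin n → ℝ)) (θh : ℝ → (Fin p → ℝ)) (u : ℝ → (Fin m → ℝ))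
    -- the adaptation law τ(t) = ((∂V_a/∂x)(x(t),θ̂(t)) · F(x(t)))ᵀ
    (τ : ℝ → (Fin p → ℝ))
    (hτ : ∀ t, τ t = fun i =>
      (fderiv ℝ (fun y => Va (y, θh t)) (x t)) (fun j => F (x t) j i))
    -- (i) closed-loop dynamics ẋ = f(x) + F(x) θ⋆ + g(x) u
    (hx : ∀ t, HasDerivAt x
      (f (x t) + (F (x t)).mulVec θs + (g (x t)).mulVec (u t)) t)
    -- (ii) parameter update θ̂̇ = Γ τ
    (hθh : ∀ t, HasDerivAt θh (Γ.mulVec (τ t)) t)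
    -- (iii) the aCLF inequality
    (hclf : ∀ t,
      (fderiv ℝ (fun y => Va (y, θh t)) (x t))
        (f (x t)
          + (F (x t)).mulVec
              (θh t + Γ.mulVec (fun i =>
                (fderiv ℝ (fun θ => Va (x t, θ)) (θh t)) (Pi.single i 1)))
          + (g (x t)).mulVec (u t))
      ≤ -α₃ (euclNorm (x t)) (θh t))
    -- the composite Lyapunov function
    (V : ℝ → ℝ)
    (hV : V = fun t => Va (x t, θh t)
      + (1 / 2) * ((θs - θh t) ⬝ᵥ Γ⁻¹.mulVec (θs - θh t))) :
    ∀ t, DifferentiableAt ℝ V t ∧ deriv V t ≤ -α₃ (euclNorm (x t)) (θh t) := by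
  intro t
  have hΓsymm : Γ.IsSymm := isHermitian_iff_isSymm.mp hΓ.isHermitian
  have hΓinv (v : Fin p → ℝ) : Γ⁻¹ *ᵥ (Γ *ᵥ v) = v := by
    rw [mulVec_mulVec, nonsing_inv_mul _ hΓ.det_pos.ne'.isUnit, one_mulVec]
  have hquad := ((hasDerivAt_const t θs).fun_sub (hθh t)).dotProduct_mulVec_self hΓsymm.inv
  have hVt : HasDerivAt V
      (fderiv ℝ (fun y => Va (y, θh t)) (x t) (f (x t) + F (x t) *ᵥ θs + g (x t) *ᵥ u t)
        + fderiv ℝ (fun θ => Va (x t, θ)) (θh t) (Γ *ᵥ τ t) - (θs - θh t) ⬝ᵥ τ t) t := by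
    rw [hV]
    refine (((hVa.differentiable one_ne_zero _).hasDerivAt_comp_prodMk (hx t) (hθh t)).fun_add
      (hquad.const_mul (1 / 2))).congr_deriv ?_
    rw [zero_sub, mulVec_neg, hΓinv, dotProduct_neg]
    ring
  refine ⟨hVt.differentiableAt, hVt.deriv ▸ ?_⟩
  rw [hτ t, apply_add_sub_dotProduct_eq_of_update_law _ _ _ hΓsymm]
  exact hclf t

/-- Composite Lyapunov derivative bound for adaptive CLFs: along the closed
loop with update law `τ = ((∂V_a/∂x) F(x))ᵀ` and the aCLF inequality, the
composite Lyapunov function `V(t) = V_a(x(t),θ̂(t)) + (1/2) θ̃ᵀ Γ⁻¹ θ̃` is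
differentiable with `V̇(t) ≤ −α₃(‖x(t)‖, θ̂(t))` for all `t`. -/
theorem composite_lyapunov_derivative_bound
    {n p m : ℕ}
    (Va : ((Fin n → ℝ) × (Fin p → ℝ)) → ℝ) (hVa : ContDiff ℝ 1 Va)
    (f : (Fin n → ℝ) → (Fin n → ℝ)) (hf : Continuous f)
    (F : (Fin n → ℝ) → Matrix (Fin n) (Fin p) ℝ) (hF : Continuous F)
    (g : (Fin n → ℝ) → Matrix (Fin n) (Fin m) ℝ) (hg : Continuous g)
    (Γ : Matrix (Fin p) (Fin p) ℝ) (hΓ : Γ.PosDef)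
    (θs : Fin p → ℝ)
    (α₃ : ℝ → (Fin p → ℝ) → ℝ)
    (x : ℝ → (Fin n → ℝ)) (θh : ℝ → (Fin p → ℝ)) (u : ℝ → (Fin m → ℝ))
    -- the adaptation law τ(t) = ((∂V_a/∂x)(x(t),θ̂(t)) · F(x(t)))ᵀ
    (τ : ℝ → (Fin p → ℝ))
    (hτ : ∀ t, τ t = fun i =>
      (fderiv ℝ (fun y => Va (y, θh t)) (x t)) (fun j => F (x t) j i))
    -- (i) closed-loop dynamics ẋ = f(x) + F(x) θ⋆ + g(x) u
    (hx : ∀ t, HasDerivAt x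
      (f (x t) + (F (x t)).mulVec θs + (g (x t)).mulVec (u t)) t)
    -- (ii) parameter update θ̂̇ = Γ τ
    (hθh : ∀ t, HasDerivAt θh (Γ.mulVec (τ t)) t)
    -- (iii) the aCLF inequality
    (hclf : ∀ t,
      (fderiv ℝ (fun y => Va (y, θh t)) (x t))
        (f (x t)
          + (F (x t)).mulVec
              (θh t + Γ.mulVec (fun i =>
                (fderiv ℝ (fun θ => Va (x t, θ)) (θh t)) (Pi.single i 1)))
          + (g (x t)).mulVec (u t))
      ≤ -α₃ (euclNorm (x t)) (θh t))
    -- the composite Lyapunov function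
    (V : ℝ → ℝ)
    (hV : V = fun t => Va (x t, θh t)
      + (1 / 2) * ((θs - θh t) ⬝ᵥ Γ⁻¹.mulVec (θs - θh t))) :
    ∀ t, DifferentiableAt ℝ V t ∧ deriv V t ≤ -α₃ (euclNorm (x t)) (θh t) :=
  composite_lyapunov_derivative_bound_general Va hVa f F g Γ hΓ θs α₃ x θh u τ hτ hx hθh hclf V hV
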